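/- Let d_L := min 𝒟₊ and let t₁, t₂, t₃, t₄, g, k satisfy 1 ≤ t₁ ≤ t₂ < g ≤ t₃ ≤ t₄ < k ≤ 𝒯+1 with g ≤ 𝒯. Define ĀTT := (t₄ − t₃ + 1)^{−1}·Σ_{t=t₃}^{t₄} ATT(g, t, d_L | g, d_L) and ĀTE := (t₄ − t₃ + 1)^{−1}·Σ_{t=t₃}^{t₄} ATE(g, t, d_L). (1) If E[Y_t(0) − Y_{t−1}(0) | G = g′, D = d] = E[Y_t(0) − Y_{t−1}(0) | D = 0] for all g′ ∈ {2, …, 𝒯}, t ∈ {2, …, 𝒯} and d ∈ 𝒟₊, then E[Ȳ^{(t₃,t₄)} − Ȳ^{(t₁,t₂)} | G = g, D = d_L] − E[Ȳ^{(t₃,t₄)} − Ȳ^{(t₁,t₂)} | G = k] = ĀTT. (2) If, in addition, E[Y_t(g′, d) − Y_{t−1}(0) | G = g′, D = d] = E[Y_t(g′, d) − Y_{t−1}(0) | G = g′] for all g′ ∈ {2, …, 𝒯}, t ∈ {2, …, 𝒯} and d ∈ 𝒟₊ (strong parallel trends), then the same left-hand side equals ĀTE. -/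
import Mathlib


open MeasureTheory

/-- Conditional expectation of `X` given the event `A`: `E[X | A] = E[X·1_A] / P(A)`. -/
noncomputable def cExp {Ω : Type*} [MeasurableSpace Ω] (P : Measure Ω)
    (X : Ω → ℝ) (A : Set Ω) : ℝ :=
  (∫ ω in A, X ω ∂P) / (P A).toReal

section Helpers
variable {Ω : Type*} [MeasurableSpace Ω] {P : Measure Ω}

lemma cExp_congr {X Y : Ω → ℝ} {A : Set Ω} (hA : MeasurableSet A)
    (h : ∀ ω ∈ A, X ω = Y ω) : cExp P X A = cExp P Y A := by
  unfold cExp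
  rw [setIntegral_congr_fun hA h]

lemma cExp_sub' (X Y : Ω → ℝ) (hX : Integrable X P) (hY : Integrable Y P) (A : Set Ω) :
    cExp P (fun ω => X ω - Y ω) A = cExp P X A - cExp P Y A := by
  unfold cExp
  rw [integral_sub hX.integrableOn hY.integrableOn, sub_div]

lemma cExp_comb (a b : ℝ) (s₁ s₂ : Finset ℕ) (f h : ℕ → Ω → ℝ)
    (hf : ∀ t ∈ s₁, Integrable (f t) P) (hh : ∀ t ∈ s₂, Integrable (h t) P)
    (A : Set Ω) :
    cExp P (fun ω => a * ∑ t ∈ s₁, f t ω - b * ∑ t ∈ s₂, h t ω) A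
      = a * ∑ t ∈ s₁, cExp P (f t) A - b * ∑ t ∈ s₂, cExp P (h t) A := by
  unfold cExp
  rw [integral_sub ((integrable_finset_sum s₁ (fun t ht => (hf t ht).integrableOn)).const_mul a)
        ((integrable_finset_sum s₂ (fun t ht => (hh t ht).integrableOn)).const_mul b),
      integral_const_mul, integral_const_mul,
      integral_finset_sum _ (fun t ht => (hf t ht).integrableOn),
      integral_finset_sum _ (fun t ht => (hh t ht).integrableOn),
      sub_div, mul_div_assoc, mul_div_assoc, Finset.sum_div, Finset.sum_div]

lemma cExp_partition {s : Finset ℝ} (hne : s.Nonempty) {B : ℝ → Set Ω}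
    (hB : ∀ d ∈ s, MeasurableSet (B d))
    (hdisj : (s : Set ℝ).PairwiseDisjoint B)
    (hpos : ∀ d ∈ s, 0 < P (B d)) (hfin : ∀ d ∈ s, P (B d) ≠ ⊤)
    {X : Ω → ℝ} (hX : Integrable X P) {c : ℝ}
    (hc : ∀ d ∈ s, cExp P X (B d) = c) :
    cExp P X (⋃ d ∈ s, B d) = c := by
  have hint : ∫ ω in ⋃ d ∈ s, B d, X ω ∂P = ∑ d ∈ s, ∫ ω in B d, X ω ∂P :=
    integral_biUnion_finset s hB hdisj (fun d hd => hX.integrableOn)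
  have hmeas : P (⋃ d ∈ s, B d) = ∑ d ∈ s, P (B d) := measure_biUnion_finset hdisj hB
  have heach : ∀ d ∈ s, ∫ ω in B d, X ω ∂P = c * (P (B d)).toReal := by
    intro d hd
    have h0 : (P (B d)).toReal ≠ 0 :=
      (ENNReal.toReal_pos (hpos d hd).ne' (hfin d hd)).ne'
    have := hc d hd
    unfold cExp at this
    field_simp at this
    linarith [this]
  have hpos' : 0 < ∑ d ∈ s, (P (B d)).toReal :=
    Finset.sum_pos (fun d hd => ENNReal.toReal_pos (hpos d hd).ne' (hfin d hd)) hne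
  unfold cExp
  rw [hint, hmeas, Finset.sum_congr rfl heach, ← Finset.mul_sum, ENNReal.toReal_sum hfin,
      mul_div_cancel_right₀ _ hpos'.ne']
end Helpers

/-- Staggered adoption with a multi-valued dose; `d_L = min 𝒟₊` and
`1 ≤ t₁ ≤ t₂ < g ≤ t₃ ≤ t₄ < k ≤ T+1` with `g ≤ T`.
(1) Under parallel trends on untreated potential outcomes (with the never-treated group),
`E[Ȳ^{(t₃,t₄)} − Ȳ^{(t₁,t₂)} | G = g, D = d_L] − E[Ȳ^{(t₃,t₄)} − Ȳ^{(t₁,t₂)} | G = k]`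
equals the time-averaged `ATT(g, t, d_L | g, d_L)` over `t ∈ {t₃,…,t₄}`.
(2) If, in addition, strong parallel trends holds, the same left-hand side equals the
time-averaged `ATE(g, t, d_L)` over `t ∈ {t₃,…,t₄}`. -/
theorem averaged_path_comparison_att_ate
    {Ω : Type*} [MeasurableSpace Ω] (P : Measure Ω) [IsProbabilityMeasure P]
    (T : ℕ) (hT : 2 ≤ T)
    (Dpos : Finset ℝ) (hDposNe : Dpos.Nonempty) (hDposPos : ∀ d ∈ Dpos, (0 : ℝ) < d)
    (D : Ω → ℝ) (hD : Measurable D)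
    (G : Ω → ℕ) (hG : Measurable G)
    (hGrange : ∀ ω, 2 ≤ G ω ∧ G ω ≤ T + 1)
    (hDval : ∀ ω, D ω = 0 ∨ D ω ∈ Dpos)
    (hD0G : ∀ ω, D ω = 0 ↔ G ω = T + 1)
    (hpNever : 0 < P {ω | G ω = T + 1})
    (hpgd : ∀ g : ℕ, 2 ≤ g → g ≤ T → ∀ d ∈ Dpos, 0 < P {ω | G ω = g ∧ D ω = d})
    (Y0 : ℕ → Ω → ℝ) (hY0m : ∀ t, Measurable (Y0 t)) (hY0i : ∀ t, Integrable (Y0 t) P)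
    (Ypo : ℕ → ℕ → ℝ → Ω → ℝ)
    (hYpom : ∀ t g dd, Measurable (Ypo t g dd)) (hYpoi : ∀ t g dd, Integrable (Ypo t g dd) P)
    (hNoAnt : ∀ t g : ℕ, ∀ dd ∈ Dpos, 2 ≤ g → g ≤ T → t < g → Ypo t g dd = Y0 t)
    (Y : ℕ → Ω → ℝ)
    (hYobs : ∀ t ω, Y t ω = if t < G ω then Y0 t ω else Ypo t (G ω) (D ω) ω)
    (t₁ t₂ t₃ t₄ g k : ℕ)
    (h1 : 1 ≤ t₁) (h12 : t₁ ≤ t₂) (h2g : t₂ < g) (hgT : g ≤ T) (hg3 : g ≤ t₃)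
    (h34 : t₃ ≤ t₄) (h4k : t₄ < k) (hkT : k ≤ T + 1)
    (hPT : ∀ g' : ℕ, 2 ≤ g' → g' ≤ T → ∀ t : ℕ, 2 ≤ t → t ≤ T → ∀ dd ∈ Dpos,
      cExp P (fun ω => Y0 t ω - Y0 (t - 1) ω) {ω | G ω = g' ∧ D ω = dd} =
        cExp P (fun ω => Y0 t ω - Y0 (t - 1) ω) {ω | D ω = 0}) :
    (cExp P
        (fun ω => ((t₄ : ℝ) - (t₃ : ℝ) + 1)⁻¹ * ∑ t ∈ Finset.Icc t₃ t₄, Y t ω -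
          ((t₂ : ℝ) - (t₁ : ℝ) + 1)⁻¹ * ∑ t ∈ Finset.Icc t₁ t₂, Y t ω)
        {ω | G ω = g ∧ D ω = Dpos.min' hDposNe} -
      cExp P
        (fun ω => ((t₄ : ℝ) - (t₃ : ℝ) + 1)⁻¹ * ∑ t ∈ Finset.Icc t₃ t₄, Y t ω -
          ((t₂ : ℝ) - (t₁ : ℝ) + 1)⁻¹ * ∑ t ∈ Finset.Icc t₁ t₂, Y t ω)
        {ω | G ω = k} =
      ((t₄ : ℝ) - (t₃ : ℝ) + 1)⁻¹ * ∑ t ∈ Finset.Icc t₃ t₄,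
        cExp P (fun ω => Ypo t g (Dpos.min' hDposNe) ω - Y0 t ω)
          {ω | G ω = g ∧ D ω = Dpos.min' hDposNe}) ∧
    ((∀ g' : ℕ, 2 ≤ g' → g' ≤ T → ∀ t : ℕ, 2 ≤ t → t ≤ T → ∀ dd ∈ Dpos,
        cExp P (fun ω => Ypo t g' dd ω - Y0 (t - 1) ω) {ω | G ω = g' ∧ D ω = dd} =
          cExp P (fun ω => Ypo t g' dd ω - Y0 (t - 1) ω) {ω | G ω = g'}) →
      cExp P
          (fun ω => ((t₄ : ℝ) - (t₃ : ℝ) + 1)⁻¹ * ∑ t ∈ Finset.Icc t₃ t₄, Y t ω -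
            ((t₂ : ℝ) - (t₁ : ℝ) + 1)⁻¹ * ∑ t ∈ Finset.Icc t₁ t₂, Y t ω)
          {ω | G ω = g ∧ D ω = Dpos.min' hDposNe} -
        cExp P
          (fun ω => ((t₄ : ℝ) - (t₃ : ℝ) + 1)⁻¹ * ∑ t ∈ Finset.Icc t₃ t₄, Y t ω -
            ((t₂ : ℝ) - (t₁ : ℝ) + 1)⁻¹ * ∑ t ∈ Finset.Icc t₁ t₂, Y t ω)
          {ω | G ω = k} =
        ((t₄ : ℝ) - (t₃ : ℝ) + 1)⁻¹ * ∑ t ∈ Finset.Icc t₃ t₄,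
          cExp P (fun ω => Ypo t g (Dpos.min' hDposNe) ω - Y0 t ω) {ω | G ω = g}) := by
  classical
  set dL := Dpos.min' hDposNe with hdLdef
  have hdLmem : dL ∈ Dpos := Dpos.min'_mem hDposNe
  have hg2 : 2 ≤ g := by omega
  have ht4T : t₄ ≤ T := by omega
  set c₃ := ((t₄ : ℝ) - (t₃ : ℝ) + 1)⁻¹ with hc3
  set c₁ := ((t₂ : ℝ) - (t₁ : ℝ) + 1)⁻¹ with hc1
  set A : Set Ω := {ω | G ω = g ∧ D ω = dL} with hAdef
  set B : Set Ω := {ω | G ω = k} with hBdef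
  have mGD : ∀ (m : ℕ) (d : ℝ), MeasurableSet {ω | G ω = m ∧ D ω = d} := fun m d =>
    (hG (measurableSet_singleton m)).inter (hD (measurableSet_singleton d))
  have mA : MeasurableSet A := mGD g dL
  have mB : MeasurableSet B := hG (measurableSet_singleton k)
  have mGg : MeasurableSet {ω | G ω = g} := hG (measurableSet_singleton g)
  -- partition lemma for {G = m}
  have hdisj : ∀ m : ℕ, (Dpos : Set ℝ).PairwiseDisjoint
      (fun d => {ω | G ω = m ∧ D ω = d}) := by
    intro m d _ d' _ hne
    rw [Function.onFun, Set.disjoint_left]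
    rintro ω ⟨_, h1⟩ ⟨_, h2⟩
    exact hne (h1.symm.trans h2)
  have partition : ∀ (m : ℕ), 2 ≤ m → m ≤ T → ∀ (X : Ω → ℝ), Integrable X P → ∀ c : ℝ,
      (∀ d ∈ Dpos, cExp P X {ω | G ω = m ∧ D ω = d} = c) →
      cExp P X {ω | G ω = m} = c := by
    intro m hm2 hmT X hX c hc
    have hset : {ω | G ω = m} = ⋃ d ∈ Dpos, {ω | G ω = m ∧ D ω = d} := by
      ext ω
      simp only [Set.mem_setOf_eq, Set.mem_iUnion, exists_prop]
      constructor
      · intro h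
        rcases hDval ω with h0 | hd
        · have := (hD0G ω).mp h0
          omega
        · exact ⟨D ω, hd, h, rfl⟩
      · rintro ⟨d, hd, h, _⟩; exact h
    rw [hset]
    exact cExp_partition hDposNe (fun d _ => mGD m d) (hdisj m)
      (fun d hd => hpgd m hm2 hmT d hd) (fun d _ => measure_ne_top P _) hX hc
  -- parallel trends for B
  have hBPT : ∀ t : ℕ, 2 ≤ t → t ≤ T →
      cExp P (fun ω => Y0 t ω - Y0 (t - 1) ω) B =
        cExp P (fun ω => Y0 t ω - Y0 (t - 1) ω) {ω | D ω = 0} := by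
    intro t h2 hT'
    by_cases hk : k = T + 1
    · have hBeq : B = {ω | D ω = 0} := by
        ext ω
        simp only [hBdef, Set.mem_setOf_eq, hk]
        exact (hD0G ω).symm
      rw [hBeq]
    · have hk2 : 2 ≤ k := by omega
      have hkT' : k ≤ T := by omega
      exact partition k hk2 hkT' _ ((hY0i t).sub (hY0i (t - 1))) _
        (fun d hd => hPT k hk2 hkT' t h2 hT' d hd)
  -- δ is constant over [1, T]
  have hstep : ∀ t : ℕ, 2 ≤ t → t ≤ T →
      cExp P (Y0 t) A - cExp P (Y0 t) B =
        cExp P (Y0 (t - 1)) A - cExp P (Y0 (t - 1)) B := by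
    intro t h2 hT'
    have hA' := hPT g hg2 hgT t h2 hT' dL hdLmem
    have hB' := hBPT t h2 hT'
    rw [cExp_sub' (Y0 t) (Y0 (t - 1)) (hY0i t) (hY0i (t - 1)) A] at hA'
    rw [cExp_sub' (Y0 t) (Y0 (t - 1)) (hY0i t) (hY0i (t - 1)) B] at hB'
    linarith [hA', hB']
  have hconst : ∀ t : ℕ, 1 ≤ t → t ≤ T →
      cExp P (Y0 t) A - cExp P (Y0 t) B = cExp P (Y0 1) A - cExp P (Y0 1) B := by
    intro t
    induction t with
    | zero => omega
    | succ n ih =>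
      intro h1' hT'
      rcases Nat.lt_or_ge n 1 with hn | hn
      · have : n = 0 := by omega
        subst this; rfl
      · have := hstep (n + 1) (by omega) hT'
        simp only [Nat.add_sub_cancel] at this
        rw [this]
        exact ih (by omega) (by omega)
  -- sums of the constant δ
  have hcard34 : ((Finset.Icc t₃ t₄).card : ℝ) = (t₄ : ℝ) - (t₃ : ℝ) + 1 := by
    rw [Nat.card_Icc]
    have h : t₃ ≤ t₄ + 1 := by omega
    push_cast [h]
    ring
  have hcard12 : ((Finset.Icc t₁ t₂).card : ℝ) = (t₂ : ℝ) - (t₁ : ℝ) + 1 := by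
    rw [Nat.card_Icc]
    have h : t₁ ≤ t₂ + 1 := by omega
    push_cast [h]
    ring
  have hne34 : (t₄ : ℝ) - (t₃ : ℝ) + 1 ≠ 0 := by
    have : (t₃ : ℝ) ≤ (t₄ : ℝ) := by exact_mod_cast h34
    linarith
  have hne12 : (t₂ : ℝ) - (t₁ : ℝ) + 1 ≠ 0 := by
    have : (t₁ : ℝ) ≤ (t₂ : ℝ) := by exact_mod_cast h12
    linarith
  have hs34 : ∑ t ∈ Finset.Icc t₃ t₄, (cExp P (Y0 t) A - cExp P (Y0 t) B) =
      ∑ _t ∈ Finset.Icc t₃ t₄, (cExp P (Y0 1) A - cExp P (Y0 1) B) :=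
    Finset.sum_congr rfl (fun t ht => by
      rw [Finset.mem_Icc] at ht
      exact hconst t (by omega) (by omega))
  have S34 : c₃ * (∑ t ∈ Finset.Icc t₃ t₄, cExp P (Y0 t) A -
      ∑ t ∈ Finset.Icc t₃ t₄, cExp P (Y0 t) B) =
      cExp P (Y0 1) A - cExp P (Y0 1) B := by
    rw [← Finset.sum_sub_distrib, hs34,
      Finset.sum_const, nsmul_eq_mul, hcard34, hc3, ← mul_assoc,
      inv_mul_cancel₀ hne34, one_mul]
  have hs12 : ∑ t ∈ Finset.Icc t₁ t₂, (cExp P (Y0 t) A - cExp P (Y0 t) B) =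
      ∑ _t ∈ Finset.Icc t₁ t₂, (cExp P (Y0 1) A - cExp P (Y0 1) B) :=
    Finset.sum_congr rfl (fun t ht => by
      rw [Finset.mem_Icc] at ht
      exact hconst t (by omega) (by omega))
  have S12 : c₁ * (∑ t ∈ Finset.Icc t₁ t₂, cExp P (Y0 t) A -
      ∑ t ∈ Finset.Icc t₁ t₂, cExp P (Y0 t) B) =
      cExp P (Y0 1) A - cExp P (Y0 1) B := by
    rw [← Finset.sum_sub_distrib, hs12,
      Finset.sum_const, nsmul_eq_mul, hcard12, hc1, ← mul_assoc,
      inv_mul_cancel₀ hne12, one_mul]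
  -- rewrite observed outcomes on A and B
  have EA : cExp P (fun ω => c₃ * ∑ t ∈ Finset.Icc t₃ t₄, Y t ω -
        c₁ * ∑ t ∈ Finset.Icc t₁ t₂, Y t ω) A =
      c₃ * ∑ t ∈ Finset.Icc t₃ t₄, cExp P (Ypo t g dL) A -
        c₁ * ∑ t ∈ Finset.Icc t₁ t₂, cExp P (Y0 t) A := by
    rw [cExp_congr mA (fun ω hω => ?_)]
    · exact cExp_comb c₃ c₁ _ _ _ _ (fun t _ => hYpoi t g dL) (fun t _ => hY0i t) A
    · obtain ⟨hGω, hDω⟩ := hω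
      congr 1
      · congr 1
        refine Finset.sum_congr rfl (fun t ht => ?_)
        rw [Finset.mem_Icc] at ht
        rw [hYobs t ω, hGω, hDω, if_neg (by omega)]
      · congr 1
        refine Finset.sum_congr rfl (fun t ht => ?_)
        rw [Finset.mem_Icc] at ht
        rw [hYobs t ω, hGω, if_pos (by omega)]
  have EB : cExp P (fun ω => c₃ * ∑ t ∈ Finset.Icc t₃ t₄, Y t ω -
        c₁ * ∑ t ∈ Finset.Icc t₁ t₂, Y t ω) B =
      c₃ * ∑ t ∈ Finset.Icc t₃ t₄, cExp P (Y0 t) B -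
        c₁ * ∑ t ∈ Finset.Icc t₁ t₂, cExp P (Y0 t) B := by
    rw [cExp_congr mB (fun ω hω => ?_)]
    · exact cExp_comb c₃ c₁ _ _ _ _ (fun t _ => hY0i t) (fun t _ => hY0i t) B
    · have hGω : G ω = k := hω
      congr 1
      · congr 1
        refine Finset.sum_congr rfl (fun t ht => ?_)
        rw [Finset.mem_Icc] at ht
        rw [hYobs t ω, hGω, if_pos (by omega)]
      · congr 1
        refine Finset.sum_congr rfl (fun t ht => ?_)
        rw [Finset.mem_Icc] at ht
        rw [hYobs t ω, hGω, if_pos (by omega)]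
  -- part 1
  have part1 : cExp P (fun ω => c₃ * ∑ t ∈ Finset.Icc t₃ t₄, Y t ω -
        c₁ * ∑ t ∈ Finset.Icc t₁ t₂, Y t ω) A -
      cExp P (fun ω => c₃ * ∑ t ∈ Finset.Icc t₃ t₄, Y t ω -
        c₁ * ∑ t ∈ Finset.Icc t₁ t₂, Y t ω) B =
      c₃ * ∑ t ∈ Finset.Icc t₃ t₄, cExp P (fun ω => Ypo t g dL ω - Y0 t ω) A := by
    have hs' : ∑ t ∈ Finset.Icc t₃ t₄, cExp P (fun ω => Ypo t g dL ω - Y0 t ω) A =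
        ∑ t ∈ Finset.Icc t₃ t₄, (cExp P (Ypo t g dL) A - cExp P (Y0 t) A) :=
      Finset.sum_congr rfl
        (fun t _ => cExp_sub' (Ypo t g dL) (Y0 t) (hYpoi t g dL) (hY0i t) A)
    rw [EA, EB, hs', Finset.sum_sub_distrib]
    linear_combination S34 - S12
  refine ⟨part1, fun hSPT => ?_⟩
  -- part 2
  have hATE : ∀ t ∈ Finset.Icc t₃ t₄,
      cExp P (fun ω => Ypo t g dL ω - Y0 t ω) A =
        cExp P (fun ω => Ypo t g dL ω - Y0 t ω) {ω | G ω = g} := by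
    intro t ht
    rw [Finset.mem_Icc] at ht
    have h2t : 2 ≤ t := by omega
    have htT : t ≤ T := by omega
    have e1 := hSPT g hg2 hgT t h2t htT dL hdLmem
    have e2 := hPT g hg2 hgT t h2t htT dL hdLmem
    have e3 : cExp P (fun ω => Y0 t ω - Y0 (t - 1) ω) {ω | G ω = g} =
        cExp P (fun ω => Y0 t ω - Y0 (t - 1) ω) {ω | D ω = 0} :=
      partition g hg2 hgT _ ((hY0i t).sub (hY0i (t - 1))) _
        (fun d hd => hPT g hg2 hgT t h2t htT d hd)
    rw [cExp_sub' (Ypo t g dL) (Y0 (t - 1)) (hYpoi t g dL) (hY0i (t - 1)) A,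
        cExp_sub' (Ypo t g dL) (Y0 (t - 1)) (hYpoi t g dL) (hY0i (t - 1)) {ω | G ω = g}] at e1
    rw [cExp_sub' (Y0 t) (Y0 (t - 1)) (hY0i t) (hY0i (t - 1)) A] at e2
    rw [cExp_sub' (Y0 t) (Y0 (t - 1)) (hY0i t) (hY0i (t - 1)) {ω | G ω = g}] at e3
    rw [cExp_sub' (Ypo t g dL) (Y0 t) (hYpoi t g dL) (hY0i t) A,
        cExp_sub' (Ypo t g dL) (Y0 t) (hYpoi t g dL) (hY0i t) {ω | G ω = g}]
    linarith [e1, e2, e3]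
  rw [part1]
  congr 1
  exact Finset.sum_congr rfl (fun t ht => hATE t ht)
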